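/- arXiv:2404.08550 — 7 statements merged into one kernel-verified Lean document; each statement's English description precedes it below -/
import Mathlib

section
/- Let f(z) = ∑ᵢ₌₀ⁿ aᵢ z^{n-i} with a₀ ≠ 0, aₙ ≠ 0, and g(z) = ∑ⱼ₌₀ᵐ bⱼ z^{m-j} with b₀ ≠ 0, bₘ ≠ 0, be complex polynomials. Then f and g have a unique common root, which is simple for both, if and only if R(f,g) = 0, ∂R/∂bₘ ≠ 0, and ∂R/∂aₙ ≠ 0 (where R(f,g) is the resultant viewed as a polynomial in the coefficients). -/
/-- Partial derivative of `F` with respect to the `j`-th coordinate. -/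
noncomputable def pd {ι : Type*} [DecidableEq ι] (j : ι) (F : (ι → ℂ) → ℂ) :
    (ι → ℂ) → ℂ :=
  fun b => deriv (fun t => F (Function.update b j t)) (b j)

/-- card of filter = 1 iff unique element satisfying predicate -/
lemma card_filter_eq_one_iff {α : Type*} [Fintype α] [DecidableEq α] (p : α → Prop)
    [DecidablePred p] : (Finset.univ.filter p).card = 1 ↔ ∃! a, p a := by
  rw [Finset.card_eq_one]
  constructor
  · rintro ⟨a, ha⟩
    rw [Finset.eq_singleton_iff_unique_mem] at ha
    simp only [Finset.mem_filter, Finset.mem_univ, true_and] at ha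
    exact ⟨a, ha.1, ha.2⟩
  · rintro ⟨a, ha, hu⟩
    refine ⟨a, ?_⟩
    rw [Finset.eq_singleton_iff_unique_mem]
    simp only [Finset.mem_filter, Finset.mem_univ, true_and]
    exact ⟨ha, hu⟩

/-- unique zero iff product zero and sum of complementary products nonzero -/
lemma unique_zero_iff {k : ℕ} (G : Fin k → ℂ) :
    ((∏ i, G i = 0) ∧ ∑ i, ∏ i' ∈ Finset.univ.erase i, G i' ≠ 0) ↔ ∃! i, G i = 0 := by
  constructor
  · rintro ⟨hp, hs⟩
    obtain ⟨i₀, -, h0⟩ := Finset.prod_eq_zero_iff.mp hp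
    refine ⟨i₀, h0, ?_⟩
    intro i hi
    by_contra hne
    apply hs
    apply Finset.sum_eq_zero
    intro i' _
    by_cases h : i' = i₀
    · exact Finset.prod_eq_zero (Finset.mem_erase.mpr ⟨by rw [h]; exact hne, Finset.mem_univ _⟩) hi
    · exact Finset.prod_eq_zero (Finset.mem_erase.mpr ⟨Ne.symm h, Finset.mem_univ _⟩) h0
  · rintro ⟨i₀, h0, huniq⟩
    constructor
    · exact Finset.prod_eq_zero (Finset.mem_univ i₀) h0
    · rw [Finset.sum_eq_single i₀]
      · rw [Finset.prod_ne_zero_iff]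
        intro i hi hGi
        exact (Finset.mem_erase.mp hi).1 (huniq i hGi)
      · intro i _ hne
        exact Finset.prod_eq_zero
          (Finset.mem_erase.mpr ⟨fun h => hne h.symm, Finset.mem_univ _⟩) h0
      · intro h; exact absurd (Finset.mem_univ i₀) h

/-- derivative of c * ∏ (t + C i) -/
lemma deriv_prod_add {k : ℕ} (c x : ℂ) (C : Fin k → ℂ) :
    deriv (fun t => c * ∏ i, (t + C i)) x
      = c * ∑ i, ∏ i' ∈ Finset.univ.erase i, (x + C i') := by
  have h : HasDerivAt (fun t => ∏ i, (t + C i))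
      (∑ i, (∏ i' ∈ Finset.univ.erase i, (x + C i')) • (1:ℂ)) x :=
    HasDerivAt.fun_finsetProd (fun i _ => (hasDerivAt_id x).add_const (C i))
  have h2 := (h.const_mul c).deriv
  simpa [smul_eq_mul] using h2

/-- sum with last coordinate updated -/
lemma sum_update_last {k : ℕ} (c : Fin (k+1) → ℂ) (w : ℂ) (t : ℂ) :
    ∑ j : Fin (k+1), Function.update c (Fin.last k) t j * w ^ (k - (j : ℕ))
      = t + ∑ j ∈ Finset.univ.erase (Fin.last k), c j * w ^ (k - (j : ℕ)) := by
  rw [← Finset.add_sum_erase _ _ (Finset.mem_univ (Fin.last k))]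
  congr 1
  · simp [Fin.val_last]
  · apply Finset.sum_congr rfl
    intro j hj
    rw [Function.update_of_ne (Finset.mem_erase.mp hj).1]

/-- Proposition 2: `f` and `g` have a unique common root, simple for both, iff
`R(f,g) = 0`, `∂R/∂bₘ ≠ 0` and `∂R/∂aₙ ≠ 0`. -/
theorem stmt6 (n m : ℕ) (a₀ b₀ : ℂ) (ha₀ : a₀ ≠ 0) (hb₀ : b₀ ≠ 0)
    (z : Fin n → ℂ) (y : Fin m → ℂ)
    (a : Fin (n+1) → ℂ) (b : Fin (m+1) → ℂ)
    (ha : ∀ u, ∑ i : Fin (n+1), a i * u ^ (n - (i : ℕ)) = a₀ * ∏ i, (u - z i))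
    (hb : ∀ u, ∑ j : Fin (m+1), b j * u ^ (m - (j : ℕ)) = b₀ * ∏ j, (u - y j))
    (ha0 : a 0 = a₀) (hb0 : b 0 = b₀)
    (han : a (Fin.last n) ≠ 0) (hbm : b (Fin.last m) ≠ 0)
    (Rb : (Fin (m+1) → ℂ) → ℂ)
    (hRb : Rb = fun b' => a₀ ^ m * ∏ i, ∑ j : Fin (m+1), b' j * (z i) ^ (m - (j : ℕ)))
    (Ra : (Fin (n+1) → ℂ) → ℂ)
    (hRa : Ra = fun a' =>
      (-1 : ℂ) ^ (m * n) * b₀ ^ n * ∏ j, ∑ i : Fin (n+1), a' i * (y j) ^ (n - (i : ℕ))) :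
    (∃ w : ℂ,
        (Finset.univ.filter (fun i : Fin n => z i = w)).card = 1 ∧
        (Finset.univ.filter (fun j : Fin m => y j = w)).card = 1 ∧
        ∀ v : ℂ, (∃ i, z i = v) → (∃ j, y j = v) → v = w)
      ↔ (Rb b = 0 ∧ pd (Fin.last m) Rb b ≠ 0 ∧ pd (Fin.last n) Ra a ≠ 0) := by

  set G : Fin n → ℂ := fun i => ∑ j : Fin (m+1), b j * (z i) ^ (m - (j : ℕ)) with hGdef
  set F : Fin m → ℂ := fun j => ∑ i : Fin (n+1), a i * (y j) ^ (n - (i : ℕ)) with hFdef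
  have hG0 : ∀ i, G i = 0 ↔ ∃ j, y j = z i := by
    intro i
    rw [hGdef]
    simp only
    rw [hb (z i), mul_eq_zero]
    simp only [hb₀, false_or, Finset.prod_eq_zero_iff, Finset.mem_univ, true_and, sub_eq_zero]
    constructor
    · rintro ⟨j, hj⟩; exact ⟨j, hj.symm⟩
    · rintro ⟨j, hj⟩; exact ⟨j, hj.symm⟩
  have hF0 : ∀ j, F j = 0 ↔ ∃ i, z i = y j := by
    intro j
    rw [hFdef]
    simp only
    rw [ha (y j), mul_eq_zero]
    simp only [ha₀, false_or, Finset.prod_eq_zero_iff, Finset.mem_univ, true_and, sub_eq_zero]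
    constructor
    · rintro ⟨i, hi⟩; exact ⟨i, hi.symm⟩
    · rintro ⟨i, hi⟩; exact ⟨i, hi.symm⟩
  -- Rb b
  have hRbval : Rb b = a₀ ^ m * ∏ i, G i := by rw [hRb]
  have hRb0 : Rb b = 0 ↔ ∏ i, G i = 0 := by
    rw [hRbval, mul_eq_zero]
    simp [pow_eq_zero_iff, ha₀]
  -- pd for Rb
  set C : Fin n → ℂ := fun i =>
    ∑ j ∈ Finset.univ.erase (Fin.last m), b j * (z i) ^ (m - (j : ℕ)) with hCdef
  have hGC : ∀ i, b (Fin.last m) + C i = G i := by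
    intro i
    rw [hGdef, hCdef]
    simp only
    rw [← Finset.add_sum_erase _ _ (Finset.mem_univ (Fin.last m))]
    congr 1
    simp [Fin.val_last]
  have hpdb : pd (Fin.last m) Rb b
      = a₀ ^ m * ∑ i, ∏ i' ∈ Finset.univ.erase i, G i' := by
    have hfun : (fun t => Rb (Function.update b (Fin.last m) t))
        = fun t => a₀ ^ m * ∏ i, (t + C i) := by
      funext t
      rw [hRb]
      simp only
      congr 1
      exact Finset.prod_congr rfl fun i _ => sum_update_last b (z i) t
    rw [pd, hfun, deriv_prod_add]
    congr 1
    refine Finset.sum_congr rfl fun i _ => Finset.prod_congr rfl fun i' _ => hGC i'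
  -- pd for Ra
  set D : Fin m → ℂ := fun j =>
    ∑ i ∈ Finset.univ.erase (Fin.last n), a i * (y j) ^ (n - (i : ℕ)) with hDdef
  have hFD : ∀ j, a (Fin.last n) + D j = F j := by
    intro j
    rw [hFdef, hDdef]
    simp only
    rw [← Finset.add_sum_erase _ _ (Finset.mem_univ (Fin.last n))]
    congr 1
    simp [Fin.val_last]
  have hpda : pd (Fin.last n) Ra a
      = ((-1 : ℂ) ^ (m * n) * b₀ ^ n) * ∑ j, ∏ j' ∈ Finset.univ.erase j, F j' := by
    have hfun : (fun t => Ra (Function.update a (Fin.last n) t))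
        = fun t => ((-1 : ℂ) ^ (m * n) * b₀ ^ n) * ∏ j, (t + D j) := by
      funext t
      rw [hRa]
      simp only
      congr 1
      exact Finset.prod_congr rfl fun j _ => sum_update_last a (y j) t
    rw [pd, hfun, deriv_prod_add]
    congr 1
    refine Finset.sum_congr rfl fun j _ => Finset.prod_congr rfl fun j' _ => hFD j'
  have hc : ((-1 : ℂ) ^ (m * n) * b₀ ^ n) ≠ 0 :=
    mul_ne_zero (pow_ne_zero _ (by norm_num)) (pow_ne_zero _ hb₀)
  have hpdb' : pd (Fin.last m) Rb b ≠ 0 ↔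
      ∑ i, ∏ i' ∈ Finset.univ.erase i, G i' ≠ 0 := by
    rw [hpdb, mul_ne_zero_iff]
    simp [pow_ne_zero _ ha₀]
  have hpda' : pd (Fin.last n) Ra a ≠ 0 ↔
      ∑ j, ∏ j' ∈ Finset.univ.erase j, F j' ≠ 0 := by
    rw [hpda, mul_ne_zero_iff]
    simp [hc]
  -- main equivalence
  rw [hRb0, hpdb', hpda']
  constructor
  · rintro ⟨w, h1, h2, h3⟩
    rw [card_filter_eq_one_iff] at h1 h2
    obtain ⟨i₀, hzi₀, hi₀u⟩ := h1
    obtain ⟨j₀, hyj₀, hj₀u⟩ := h2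
    have hGu : ∃! i, G i = 0 := by
      refine ⟨i₀, (hG0 i₀).mpr ⟨j₀, by rw [hyj₀, hzi₀]⟩, ?_⟩
      intro i hGi
      obtain ⟨j, hj⟩ := (hG0 i).mp hGi
      exact hi₀u i (h3 (z i) ⟨i, rfl⟩ ⟨j, hj⟩)
    have hFu : ∃! j, F j = 0 := by
      refine ⟨j₀, (hF0 j₀).mpr ⟨i₀, by rw [hzi₀, hyj₀]⟩, ?_⟩
      intro j hFj
      obtain ⟨i, hi⟩ := (hF0 j).mp hFj
      exact hj₀u j (h3 (y j) ⟨i, hi⟩ ⟨j, rfl⟩)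
    obtain ⟨hGp, hGs⟩ := (unique_zero_iff G).mpr hGu
    obtain ⟨-, hFs⟩ := (unique_zero_iff F).mpr hFu
    exact ⟨hGp, hGs, hFs⟩
  · rintro ⟨hGp, hGs, hFs⟩
    obtain ⟨i₀, hGi₀, hiu⟩ := (unique_zero_iff G).mp ⟨hGp, hGs⟩
    obtain ⟨j₁, hj₁⟩ := (hG0 i₀).mp hGi₀
    have hFp : ∏ j, F j = 0 :=
      Finset.prod_eq_zero (Finset.mem_univ j₁) ((hF0 j₁).mpr ⟨i₀, hj₁.symm⟩)
    obtain ⟨j₀, hFj₀, hju⟩ := (unique_zero_iff F).mp ⟨hFp, hFs⟩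
    have hj₁0 : j₁ = j₀ := hju j₁ ((hF0 j₁).mpr ⟨i₀, hj₁.symm⟩)
    have hyj₀ : y j₀ = z i₀ := hj₁0 ▸ hj₁
    refine ⟨z i₀, ?_, ?_, ?_⟩
    · rw [card_filter_eq_one_iff]
      refine ⟨i₀, rfl, ?_⟩
      intro i hi
      exact hiu i ((hG0 i).mpr ⟨j₀, by rw [hyj₀, hi]⟩)
    · rw [card_filter_eq_one_iff]
      refine ⟨j₀, hyj₀, ?_⟩
      intro j hj
      exact hju j ((hF0 j).mpr ⟨i₀, hj.symm⟩)
    · rintro v ⟨i, hi⟩ ⟨j, hj⟩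
      have : i = i₀ := hiu i ((hG0 i).mpr ⟨j, by rw [hj, hi]⟩)
      rw [← hi, this]
end

section
/- Let f and g be complex polynomials with nonzero leading and constant coefficients, having a unique common root w of multiplicity s in f and multiplicity p in g (and no other common roots). Then for all index tuples (j₁,…,jₛ), (k₁,…,kₛ) ∈ {0,…,m}^s: ∂ˢR/∂b_{jₛ}⋯∂b_{j₁} divided by ∂ˢR/∂b_{kₛ}⋯∂b_{k₁} equals w^{(k₁+⋯+kₛ)-(j₁+⋯+jₛ)}, and the denominator is nonzero. -/
/-!
As a function of the coefficients `b'` of `g`, the resultant is `a₀ ^ m ∏ᵢ g_{b'}(zᵢ)`, a product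
of linear forms in `b'`. The `s` factors with `zᵢ = w` all equal the form `L(b') = g_{b'}(w)`,
which vanishes at `b`; the remaining factors `Q` do not vanish at `b`, since no other root of `f`
is a root of `g`. In an `s`-th derivative of `L ^ s * Q` at `b`, the only surviving term is
therefore the one differentiating each copy of `L` once, namely
`s! ∏ᵣ ∂L/∂b_{jᵣ} · Q(b) = s! w ^ (s m - ∑ᵣ jᵣ) Q(b)`; since `w ≠ 0`, two such values differ by
a power of `w`.
-/

open MvPolynomial

section Derivatives

variable {ι : Type*} [DecidableEq ι]

lemma hasDerivAt_eval_update (j : ι) (P : MvPolynomial ι ℂ) (b : ι → ℂ) (t : ℂ) :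
    HasDerivAt (fun t => eval (Function.update b j t) P)
      (eval (Function.update b j t) (pderiv j P)) t := by
  induction P using MvPolynomial.induction_on with
  | C c => simpa using hasDerivAt_const t c
  | add P Q hP hQ => simpa [Pi.add_def] using hP.add hQ
  | mul_X P i hP =>
    by_cases hij : i = j
    · subst hij
      simpa [Pi.mul_def, pderiv_mul, Function.update_apply, mul_comm, add_comm] using
        hP.mul (hasDerivAt_id t)
    · simpa [pderiv_mul, Function.update_apply, hij, mul_comm] using hP.mul_const (b i)

lemma pd_eval (j : ι) (P : MvPolynomial ι ℂ) :
    pd j (fun x => eval x P) = fun x => eval x (pderiv j P) := by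
  funext b
  simpa [pd, Function.update_eq_self] using (hasDerivAt_eval_update j P b (b j)).deriv

lemma foldr_pd_eval (l : List ι) (P : MvPolynomial ι ℂ) :
    l.foldr pd (fun x => eval x P) = fun x => eval x (l.foldr (fun j Q => pderiv j Q) P) := by
  induction l with
  | nil => rfl
  | cons j l ih => simp [List.foldr, ih, pd_eval]

end Derivatives

section PowMul

variable {σ R : Type*} [CommSemiring R] (L Q : MvPolynomial σ R) {c : σ → R}

lemma foldr_pderiv_pow_mul (hL : ∀ j, pderiv j L = C (c j)) {s : ℕ} (l : List σ)
    (hl : l.length ≤ s) :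
    ∃ H, l.foldr (fun j P => pderiv j P) (L ^ s * Q) =
      C (s.descFactorial l.length * (l.map c).prod) * L ^ (s - l.length) * Q +
        L ^ (s - l.length + 1) * H := by
  induction l with
  | nil => exact ⟨0, by simp⟩
  | cons j l ih =>
    obtain ⟨H, hH⟩ := ih (Nat.le_of_succ_le hl)
    obtain ⟨e, he⟩ : ∃ e, s - l.length = e + 1 := ⟨s - l.length - 1, by simp at hl; omega⟩
    have he' : s - (l.length + 1) = e := by omega
    have hdesc : (s.descFactorial (l.length + 1) : R) = (e + 1) * s.descFactorial l.length := by
      rw [Nat.descFactorial_succ, he]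
      push_cast
      ring
    refine ⟨C (s.descFactorial l.length * (l.map c).prod) * pderiv j Q
        + C ((e + 2) * c j) * H + L * pderiv j H, ?_⟩
    rw [List.foldr_cons, hH, he]
    simp only [List.length_cons, he', map_add, pderiv_mul, pderiv_pow, pderiv_C, hL,
      List.map_cons, List.prod_cons, hdesc]
    simp only [map_add, map_mul, map_natCast, map_ofNat, map_one]
    push_cast
    ring

lemma eval_foldr_pderiv_pow_mul_of_eval_eq_zero (hL : ∀ j, pderiv j L = C (c j)) {b : σ → R}
    (hLb : eval b L = 0) {s : ℕ} (l : List σ) (hl : l.length = s) :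
    eval b (l.foldr (fun j P => pderiv j P) (L ^ s * Q)) = s.factorial * (l.map c).prod * eval b Q := by
  obtain ⟨H, hH⟩ := foldr_pderiv_pow_mul L Q hL l hl.le
  simp [hH, hl, hLb, Nat.descFactorial_self]

end PowMul

section EvalForm

variable {R : Type*} [CommSemiring R] {m : ℕ}

/-- `eval b' (evalForm m u)` is the value at `u` of the polynomial with coefficient vector `b'`,
leading coefficient first. -/
noncomputable def evalForm (m : ℕ) (u : R) : MvPolynomial (Fin (m + 1)) R :=
  ∑ j : Fin (m + 1), C (u ^ (m - (j : ℕ))) * X j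

lemma eval_evalForm (b : Fin (m + 1) → R) (u : R) :
    eval b (evalForm m u) = ∑ j : Fin (m + 1), b j * u ^ (m - (j : ℕ)) := by
  simp [evalForm, mul_comm]

lemma pderiv_evalForm (u : R) (j : Fin (m + 1)) :
    pderiv j (evalForm m u) = C (u ^ (m - (j : ℕ))) := by
  simp [evalForm, Pi.single_apply]

end EvalForm

lemma prod_map_pow_sub {G₀ : Type*} [CommGroupWithZero G₀] {w : G₀} (hw : w ≠ 0) {m : ℕ}
    (l : List (Fin (m + 1))) :
    (l.map fun j : Fin (m + 1) => w ^ (m - (j : ℕ))).prod =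
      w ^ (l.length * (m : ℤ) - (l.map fun j : Fin (m + 1) => ((j : ℕ) : ℤ)).sum) := by
  induction l with
  | nil => simp
  | cons j l ih =>
    rw [List.map_cons, List.prod_cons, ih, ← zpow_natCast, ← zpow_add₀ hw, List.map_cons,
      List.sum_cons, List.length_cons, Nat.cast_sub (Fin.is_le j)]
    push_cast
    ring_nf

lemma prod_eq_pow_mul_prod_filter_ne {ι M α : Type*} [Fintype ι] [CommMonoid M] [DecidableEq α]
    (f : α → M) (z : ι → α) (w : α) :
    ∏ i, f (z i) = f w ^ (Finset.univ.filter fun i => z i = w).card *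
      ∏ i ∈ Finset.univ.filter (fun i => z i ≠ w), f (z i) := by
  rw [← Finset.prod_filter_mul_prod_filter_not Finset.univ (fun i => z i = w)]
  congr 1
  exact Finset.prod_eq_pow_card fun i hi => by rw [(Finset.mem_filter.mp hi).2]

theorem stmt7_general (n m s p : ℕ) (hs : 1 ≤ s) (hp : 1 ≤ p)
    (a₀ b₀ w : ℂ) (ha₀ : a₀ ≠ 0) (hb₀ : b₀ ≠ 0)
    (z : Fin n → ℂ) (y : Fin m → ℂ)
    (hz0 : ∀ i, z i ≠ 0)
    (hsw : (Finset.univ.filter (fun i : Fin n => z i = w)).card = s)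
    (hpw : (Finset.univ.filter (fun j : Fin m => y j = w)).card = p)
    (honly : ∀ i : Fin n, z i ≠ w → ∀ j : Fin m, y j ≠ z i)
    (b : Fin (m+1) → ℂ)
    (hb : ∀ u, ∑ j : Fin (m+1), b j * u ^ (m - (j : ℕ)) = b₀ * ∏ j, (u - y j))
    (Rb : (Fin (m+1) → ℂ) → ℂ)
    (hRb : Rb = fun b' => a₀ ^ m * ∏ i, ∑ j : Fin (m+1), b' j * (z i) ^ (m - (j : ℕ))) :
    ∀ l k : List (Fin (m+1)), l.length = s → k.length = s →
      (k.foldr pd Rb) b ≠ 0 ∧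
      (l.foldr pd Rb) b =
        w ^ ((k.map (fun j => ((j : ℕ) : ℤ))).sum - (l.map (fun j => ((j : ℕ) : ℤ))).sum) *
          (k.foldr pd Rb) b := by
  obtain ⟨i₀, hi₀⟩ : (Finset.univ.filter fun i => z i = w).Nonempty := by
    rw [← Finset.card_pos, hsw]; omega
  obtain ⟨j₀, hj₀⟩ : (Finset.univ.filter fun j => y j = w).Nonempty := by
    rw [← Finset.card_pos, hpw]; omega
  have hw : w ≠ 0 := (Finset.mem_filter.mp hi₀).2 ▸ hz0 i₀
  set Q := C (a₀ ^ m) * ∏ i ∈ Finset.univ.filter (fun i => z i ≠ w), evalForm m (z i)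
  have hR : Rb = fun x => eval x (evalForm m w ^ s * Q) := by
    rw [hRb, mul_left_comm, ← hsw, ← prod_eq_pow_mul_prod_filter_ne]
    simp [eval_evalForm]
  have hLb : eval b (evalForm m w) = 0 := by
    rw [eval_evalForm, hb, Finset.prod_eq_zero (Finset.mem_univ j₀)
      (by rw [(Finset.mem_filter.mp hj₀).2, sub_self]), mul_zero]
  have hQb : eval b Q ≠ 0 := by
    simp only [Q, map_mul, map_prod, eval_C, eval_evalForm, hb]
    refine mul_ne_zero (pow_ne_zero _ ha₀) (Finset.prod_ne_zero_iff.mpr fun i hi => ?_)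
    exact mul_ne_zero hb₀ (Finset.prod_ne_zero_iff.mpr fun j _ =>
      sub_ne_zero_of_ne (honly i (Finset.mem_filter.mp hi).2 j).symm)
  have hval (l : List (Fin (m + 1))) (hl : l.length = s) : (l.foldr pd Rb) b =
      s.factorial * eval b Q * w ^ (s * (m : ℤ) - (l.map fun j : Fin (m + 1) => ((j : ℕ) : ℤ)).sum) := by
    rw [hR, foldr_pd_eval]
    beta_reduce
    rw [eval_foldr_pderiv_pow_mul_of_eval_eq_zero _ _ (pderiv_evalForm w) hLb l hl,
      prod_map_pow_sub hw, hl]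
    ring
  intro l k hl hk
  rw [hval l hl, hval k hk, mul_left_comm, ← zpow_add₀ hw]
  refine ⟨mul_ne_zero (mul_ne_zero (Nat.cast_ne_zero.mpr s.factorial_ne_zero) hQb) (zpow_ne_zero _ hw), ?_⟩
  simp only [bind_pure_comp, List.map_eq_map, List.map_map, Function.comp_def]
  ring_nf

/-- Theorem 2, formula (36): if `w` is the unique common root of `f` and `g`, of
multiplicity `s` in `f` and `p` in `g`, then for any index tuples of length `s`,
`∂ˢR/∂b_{jₛ}⋯∂b_{j₁} : ∂ˢR/∂b_{kₛ}⋯∂b_{k₁} = w^{(k₁+⋯+kₛ)-(j₁+⋯+jₛ)}`. -/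
theorem stmt7 (n m s p : ℕ) (hs : 1 ≤ s) (hp : 1 ≤ p)
    (a₀ b₀ w : ℂ) (ha₀ : a₀ ≠ 0) (hb₀ : b₀ ≠ 0)
    (z : Fin n → ℂ) (y : Fin m → ℂ)
    (hz0 : ∀ i, z i ≠ 0) (hy0 : ∀ j, y j ≠ 0)
    (hsw : (Finset.univ.filter (fun i : Fin n => z i = w)).card = s)
    (hpw : (Finset.univ.filter (fun j : Fin m => y j = w)).card = p)
    (honly : ∀ i : Fin n, z i ≠ w → ∀ j : Fin m, y j ≠ z i)
    (b : Fin (m+1) → ℂ)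
    (hb : ∀ u, ∑ j : Fin (m+1), b j * u ^ (m - (j : ℕ)) = b₀ * ∏ j, (u - y j))
    (Rb : (Fin (m+1) → ℂ) → ℂ)
    (hRb : Rb = fun b' => a₀ ^ m * ∏ i, ∑ j : Fin (m+1), b' j * (z i) ^ (m - (j : ℕ))) :
    ∀ l k : List (Fin (m+1)), l.length = s → k.length = s →
      (k.foldr pd Rb) b ≠ 0 ∧
      (l.foldr pd Rb) b =
        w ^ ((k.map (fun j => ((j : ℕ) : ℤ))).sum - (l.map (fun j => ((j : ℕ) : ℤ))).sum) *
          (k.foldr pd Rb) b :=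
  stmt7_general n m s p hs hp a₀ b₀ w ha₀ hb₀ z y hz0 hsw hpw honly b hb Rb hRb
end

section
/- Let f(z) = ∑ᵢ₌₀ⁿ aᵢ z^{n-i} (a₀ ≠ 0) have w as a root of multiplicity at least s ≥ 2, and let 1 ≤ k < s. Write f^{(k)}(z) = ∑ⱼ₌₀^{n-k} bⱼ z^{n-k-j} with roots y₁ = w, y₂,…,y_{n-k}. Then the first partial derivatives of R = R(f, f^{(k)}) with respect to the coefficients aⱼ of f satisfy ∂R/∂aⱼ = (-1)^{(n-k)n} b₀ⁿ w^{n-j} ∏ᵢ₌₂^{n-k} f(yᵢ) for j = 0,…,n. -/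
open Polynomial

/-- Lemma 3, formula (53): if `w` is a root of `f` of multiplicity at least `s ≥ 2` and
`1 ≤ k < s`, then for `R = R(f, f⁽ᵏ⁾)` as a function of the coefficients `a` of `f`,
`∂R/∂aⱼ = (-1)^{(n-k)n} b₀ⁿ w^{n-j} ∏_{i≥2} f(yᵢ)`, where the `yᵢ` are the roots of
`f⁽ᵏ⁾` with `y₁ = w`. -/
theorem stmt8 (n s k : ℕ) (hs : 2 ≤ s) (hk1 : 1 ≤ k) (hks : k < s) (hkn : k < n)
    (f : Polynomial ℂ) (a : Fin (n+1) → ℂ) (ha0 : a 0 ≠ 0) (w b₀ : ℂ) (hb₀ : b₀ ≠ 0)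
    (hfa : ∀ u, f.eval u = ∑ i : Fin (n+1), a i * u ^ (n - (i : ℕ)))
    (hmult : (X - C w) ^ s ∣ f)
    (y : Fin (n - k) → ℂ)
    (hy : ∀ u, (derivative^[k] f).eval u = b₀ * ∏ i, (u - y i))
    (hy0 : y ⟨0, by omega⟩ = w)
    (Ra : (Fin (n+1) → ℂ) → ℂ)
    (hRa : Ra = fun a' => (-1 : ℂ) ^ ((n - k) * n) * b₀ ^ n *
        ∏ i : Fin (n - k), ∑ j : Fin (n+1), a' j * (y i) ^ (n - (j : ℕ))) :
    ∀ j : Fin (n+1), pd j Ra a =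
      (-1 : ℂ) ^ ((n - k) * n) * b₀ ^ n * w ^ (n - (j : ℕ)) *
        ∏ i ∈ Finset.univ.filter (fun i : Fin (n - k) => (i : ℕ) ≠ 0),
          ∑ jj : Fin (n+1), a jj * (y i) ^ (n - (jj : ℕ)) := by
  intro j
  -- w is a root of f
  have hfw : f.eval w = 0 := by
    obtain ⟨g, hg⟩ := hmult
    have hs0 : s ≠ 0 := by omega
    simp [hg, eval_pow, zero_pow hs0]
  set i0 : Fin (n - k) := ⟨0, by omega⟩ with hi0
  set c : ℂ := (-1 : ℂ) ^ ((n - k) * n) * b₀ ^ n with hc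
  -- the factors as functions of t
  set G : Fin (n - k) → ℂ → ℂ :=
    fun i t => ∑ jj : Fin (n+1), Function.update a j t jj * (y i) ^ (n - (jj : ℕ)) with hG
  have hGval : ∀ i, G i (a j) = f.eval (y i) := by
    intro i
    simp [hG, Function.update_eq_self, hfa]
  have hGderiv : ∀ i t, HasDerivAt (G i) ((y i) ^ (n - (j : ℕ))) t := by
    intro i t
    have : HasDerivAt (fun t => ∑ jj : Fin (n+1),
        Function.update a j t jj * (y i) ^ (n - (jj : ℕ)))
        (∑ jj : Fin (n+1), if jj = j then (y i) ^ (n - (jj : ℕ)) else 0) t := by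
      apply HasDerivAt.fun_sum
      intro jj _
      rcases eq_or_ne jj j with h | h
      · subst h
        simpa [Function.update_self] using (hasDerivAt_id t).mul_const ((y i) ^ (n - (jj : ℕ)))
      · simp only [if_neg h]
        simpa [Function.update_of_ne h] using
          (hasDerivAt_const t (a jj * (y i) ^ (n - (jj : ℕ))))
    simpa [Finset.sum_ite_eq' Finset.univ j] using this
  have hprod : HasDerivAt (fun t => ∏ i, G i t)
      (∑ i, (∏ i' ∈ Finset.univ.erase i, G i' (a j)) • ((y i) ^ (n - (j : ℕ)))) (a j) :=
    HasDerivAt.fun_finsetProd (fun i _ => hGderiv i (a j))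
  have hmain : HasDerivAt (fun t => Ra (Function.update a j t))
      (c * ∑ i, (∏ i' ∈ Finset.univ.erase i, G i' (a j)) • ((y i) ^ (n - (j : ℕ)))) (a j) := by
    have := hprod.const_mul c
    convert this using 2 with t
    · rfl
    · rfl
    · simp [hRa, hc, hG]
  have hpd : pd j Ra a =
      c * ∑ i, (∏ i' ∈ Finset.univ.erase i, G i' (a j)) • ((y i) ^ (n - (j : ℕ))) :=
    hmain.deriv
  rw [hpd]
  -- all terms except i = i0 vanish
  have hsum : ∑ i, (∏ i' ∈ Finset.univ.erase i, G i' (a j)) • ((y i) ^ (n - (j : ℕ)))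
      = (∏ i' ∈ Finset.univ.erase i0, G i' (a j)) • (w ^ (n - (j : ℕ))) := by
    rw [Finset.sum_eq_single i0]
    · rw [hy0]
    · intro i _ hi
      have h0 : G i0 (a j) = 0 := by rw [hGval, hy0, hfw]
      rw [Finset.prod_eq_zero (Finset.mem_erase.mpr ⟨(Ne.symm hi), Finset.mem_univ _⟩) h0]
      simp
    · simp
  rw [hsum]
  have hfilter : Finset.univ.erase i0 =
      Finset.univ.filter (fun i : Fin (n - k) => (i : ℕ) ≠ 0) := by
    ext i
    simp only [Finset.mem_erase, Finset.mem_univ, and_true, Finset.mem_filter, true_and]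
    constructor
    · intro h h0
      exact h (Fin.ext h0)
    · intro h h0
      exact h (by rw [h0])
  rw [hfilter]
  simp only [smul_eq_mul, hc]
  rw [Finset.prod_congr rfl (fun i _ => hGval i)]
  rw [Finset.prod_congr rfl (fun i _ => hfa (y i))]
  ring
end

section
/- Let f(z) = ∑ᵢ₌₀ⁿ aᵢ z^{n-i} (a₀ ≠ 0) have w as a root of multiplicity at least s (2 ≤ s < n), let 1 ≤ k < s, and let z_{s+1},…,zₙ be the remaining roots of f. Then for R = R(f, f^{(k)}), regarded as a function of the coefficients bⱼ of f^{(k)}: (1) all mixed partial derivatives of order r < s in the bⱼ vanish; (2) ∂ˢR/∂b_{jₛ}⋯∂b_{j₁} = a₀^{n-k} · s! · w^{s(n-k)-(j₁+⋯+jₛ)} · ∏ᵢ₌ₛ₊₁ⁿ f^{(k)}(zᵢ). -/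
open MvPolynomial


open MvPolynomial

lemma aux_hasDerivAt {ι : Type*} [DecidableEq ι] (p : MvPolynomial ι ℂ) (j : ι) (b : ι → ℂ) :
    HasDerivAt (fun t => eval (Function.update b j t) p) (eval b (pderiv j p)) (b j) := by
  induction p using MvPolynomial.induction_on with
  | C a => simpa [pderiv_C] using hasDerivAt_const (b j) (a : ℂ)
  | add p q hp hq => simp only [map_add]; exact hp.add hq
  | mul_X p i hp =>
    rcases eq_or_ne i j with rfl | hij
    · have h : HasDerivAt (fun t => eval (Function.update b i t) p * t) _ (b i) :=
        hp.mul (hasDerivAt_id' (b i))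
      simp only [eval_mul, eval_X, pderiv_mul, pderiv_X_self, mul_one, map_add, eval_add,
        Function.update_self]
      convert h using 1
      simp [Function.update_eq_self]
    · have h := hp.mul_const (b i)
      simp only [eval_mul, eval_X, pderiv_mul, pderiv_X_of_ne hij, map_zero, mul_zero, add_zero,
        Function.update_of_ne hij]
      exact h

lemma aux_pd_eval {ι : Type*} [DecidableEq ι] (p : MvPolynomial ι ℂ) (j : ι) :
    pd j (fun b => eval b p) = fun b => eval b (pderiv j p) := by
  funext b
  exact (aux_hasDerivAt p j b).deriv

lemma aux_foldr {ι : Type*} [DecidableEq ι] (p : MvPolynomial ι ℂ) (l : List ι) :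
    l.foldr pd (fun b => eval b p) =
      fun b => eval b (l.foldr (fun j q => pderiv j q) p) := by
  induction l with
  | nil => rfl
  | cons j l ih => simp only [List.foldr_cons, ih, aux_pd_eval]

lemma aux_foldr_C_mul {ι : Type*} [DecidableEq ι] (a : ℂ) (p : MvPolynomial ι ℂ) (l : List ι) :
    l.foldr (fun j q => pderiv j q) (C a * p) =
      C a * l.foldr (fun j q => pderiv j q) p := by
  induction l with
  | nil => rfl
  | cons j l ih => simp only [List.foldr_cons, ih, pderiv_C_mul]

lemma aux_key {ι : Type*} [DecidableEq ι] (c : ι → ℂ) (Q H : MvPolynomial ι ℂ)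
    (hQ : ∀ j, pderiv j Q = C (c j)) (s : ℕ) :
    ∀ l : List ι, ∀ m : ℕ, l.length + m = s → ∃ G,
      l.foldr (fun j q => pderiv j q) (Q ^ s * H) =
        C ((s.descFactorial l.length : ℂ) * (l.map c).prod) * (Q ^ m * H) +
          Q ^ (m + 1) * G := by
  intro l
  induction l with
  | nil => intro m hm; exact ⟨0, by simp at hm; simp [hm]⟩
  | cons j l ih =>
    intro m hm
    obtain ⟨G, hG⟩ := ih (m + 1) (by simp at hm ⊢; omega)
    have hsl : s - l.length = m + 1 := by simp at hm; omega
    refine ⟨C ((s.descFactorial l.length : ℂ) * (l.map c).prod) * pderiv j H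
      + C (((m + 2 : ℕ) : ℂ) * c j) * G + Q * pderiv j G, ?_⟩
    have hcoef : ((s.descFactorial (j :: l).length : ℕ) : ℂ) * ((j :: l).map c).prod
        = ((m + 1 : ℕ) : ℂ) * ((s.descFactorial l.length : ℂ) * (l.map c).prod) * c j := by
      simp only [List.length_cons, Nat.descFactorial_succ, List.map_cons, List.prod_cons, hsl]
      push_cast
      ring
    simp only [List.foldr_cons, hG, map_add, pderiv_mul, pderiv_C, zero_mul, zero_add,
      pderiv_pow, hQ, hcoef, map_mul]
    push_cast
    simp only [show ((m : ℕ) : MvPolynomial ι ℂ) = C ((m : ℕ) : ℂ) from (map_natCast C m).symm,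
      map_add, map_mul, map_one, map_ofNat, Nat.cast_add, Nat.cast_one, Nat.cast_ofNat]
    ring

lemma aux_iterated (p : Polynomial ℂ) (k : ℕ) :
    iteratedDeriv k (fun t => Polynomial.eval t p) =
      fun t => Polynomial.eval t (Polynomial.derivative^[k] p) := by
  induction k with
  | zero => simp
  | succ k ih =>
    rw [iteratedDeriv_succ, ih]
    funext t
    rw [Function.iterate_succ_apply']
    exact Polynomial.deriv (p := Polynomial.derivative^[k] p)

lemma aux_dvd_deriv (w : ℂ) (q : Polynomial ℂ) (a : ℕ)
    (h : (Polynomial.X - Polynomial.C w) ^ a ∣ q) :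
    (Polynomial.X - Polynomial.C w) ^ (a - 1) ∣ Polynomial.derivative q := by
  obtain ⟨u, rfl⟩ := h
  rw [Polynomial.derivative_mul]
  apply dvd_add
  · rw [Polynomial.derivative_pow]
    exact ((dvd_mul_left _ _).mul_right _).mul_right _
  · exact (pow_dvd_pow _ (Nat.sub_le a 1)).mul_right _

lemma aux_dvd_iter (w : ℂ) (q : Polynomial ℂ) (a : ℕ)
    (h : (Polynomial.X - Polynomial.C w) ^ a ∣ q) (k : ℕ) :
    (Polynomial.X - Polynomial.C w) ^ (a - k) ∣ Polynomial.derivative^[k] q := by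
  induction k with
  | zero => simpa using h
  | succ k ih =>
    rw [Function.iterate_succ_apply']
    have := aux_dvd_deriv w _ (a - k) ih
    rwa [Nat.sub_sub] at this

lemma aux_list_pow (w : ℂ) (M : ℕ) (l : List ℕ) (hl : ∀ x ∈ l, x ≤ M) :
    l.sum ≤ l.length * M ∧
      (l.map fun x => w ^ (M - x)).prod = w ^ (l.length * M - l.sum) := by
  induction l with
  | nil => simp
  | cons a l ih =>
    obtain ⟨h1, h2⟩ := ih (fun x hx => hl x (List.mem_cons_of_mem a hx))
    have ha : a ≤ M := hl a List.mem_cons_self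
    constructor
    · simp only [List.sum_cons, List.length_cons]
      nlinarith
    · simp only [List.map_cons, List.prod_cons, h2, ← pow_add, List.length_cons, List.sum_cons]
      congr 1
      have : l.length * M ≥ l.sum := h1
      rw [Nat.succ_mul]
      omega

lemma aux_card (n s : ℕ) (hsn : s ≤ n) :
    (Finset.univ.filter fun i : Fin n => (i : ℕ) < s).card = s := by
  have : (Finset.univ.filter fun i : Fin n => (i : ℕ) < s) =
      Finset.map ⟨Fin.castLE hsn, Fin.castLE_injective hsn⟩ Finset.univ := by
    ext i
    simp only [Finset.mem_filter, Finset.mem_univ, true_and, Finset.mem_map,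
      Function.Embedding.coeFn_mk]
    constructor
    · intro hi; exact ⟨⟨(i : ℕ), hi⟩, by ext; rfl⟩
    · rintro ⟨j, rfl⟩; exact j.2
  simp [this]

lemma aux_norm {N : ℕ} (l : List (Fin N)) : (l.map (fun j => (j : ℕ))) = l.map Fin.val := by
  induction l with
  | nil => rfl
  | cons a l ih => simp_all [List.pure_def, List.bind_eq_flatMap]

/-- Theorem 6: if `w` is a root of `f` of multiplicity at least `s` (`2 ≤ s < n`) and
`1 ≤ k < s`, then for `R = R(f, f⁽ᵏ⁾)` as a function of the coefficients `b` of `f⁽ᵏ⁾`: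
(1) all mixed partials of order `r < s` vanish;
(2) `∂ˢR/∂b_{jₛ}⋯∂b_{j₁} = a₀^{n-k} s! w^{s(n-k)-(j₁+⋯+jₛ)} ∏_{i>s} f⁽ᵏ⁾(zᵢ)`. -/
theorem stmt10 (n s k : ℕ) (hs : 2 ≤ s) (hsn : s < n) (hk1 : 1 ≤ k) (hks : k < s)
    (a₀ w : ℂ) (ha : a₀ ≠ 0) (z : Fin n → ℂ)
    (hw : ∀ i : Fin n, (i : ℕ) < s → z i = w)
    (b : Fin (n - k + 1) → ℂ)
    (hb : ∀ u, iteratedDeriv k (fun t => a₀ * ∏ i, (t - z i)) u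
        = ∑ j : Fin (n - k + 1), b j * u ^ ((n - k) - (j : ℕ)))
    (R : (Fin (n - k + 1) → ℂ) → ℂ)
    (hR : R = fun b' =>
      a₀ ^ (n - k) * ∏ i : Fin n, ∑ j : Fin (n - k + 1), b' j * (z i) ^ ((n - k) - (j : ℕ))) :
    (∀ l : List (Fin (n - k + 1)), 1 ≤ l.length → l.length < s → (l.foldr pd R) b = 0) ∧
    (∀ l : List (Fin (n - k + 1)), l.length = s →
      (l.foldr pd R) b = a₀ ^ (n - k) * (s.factorial : ℂ) *
        w ^ (s * (n - k) - (l.map (fun j => (j : ℕ))).sum) *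
        ∏ i ∈ Finset.univ.filter (fun i : Fin n => s ≤ (i : ℕ)),
          ∑ j : Fin (n - k + 1), b j * (z i) ^ ((n - k) - (j : ℕ))) := by
  classical
  set c : Fin (n - k + 1) → ℂ := fun j => w ^ (n - k - (j : ℕ)) with hc
  set Q : MvPolynomial (Fin (n - k + 1)) ℂ :=
    ∑ j : Fin (n - k + 1), X j * C (w ^ (n - k - (j : ℕ))) with hQdef
  set Hp : MvPolynomial (Fin (n - k + 1)) ℂ :=
    ∏ i ∈ Finset.univ.filter (fun i : Fin n => s ≤ (i : ℕ)),
      ∑ j : Fin (n - k + 1), X j * C (z i ^ (n - k - (j : ℕ))) with hHdef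
  have hcard : (Finset.univ.filter fun i : Fin n => (i : ℕ) < s).card = s := aux_card n s hsn.le
  have hQev : ∀ b' : Fin (n - k + 1) → ℂ,
      eval b' Q = ∑ j : Fin (n - k + 1), b' j * w ^ (n - k - (j : ℕ)) := by
    intro b'; simp [hQdef]
  have hHev : ∀ b' : Fin (n - k + 1) → ℂ,
      eval b' Hp = ∏ i ∈ Finset.univ.filter (fun i : Fin n => s ≤ (i : ℕ)),
        ∑ j : Fin (n - k + 1), b' j * (z i) ^ (n - k - (j : ℕ)) := by
    intro b'; simp [hHdef]
  have hfilter : (Finset.univ.filter fun i : Fin n => ¬ (i : ℕ) < s) =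
      (Finset.univ.filter fun i : Fin n => s ≤ (i : ℕ)) := by
    apply Finset.filter_congr; intro i _; simp [not_lt]
  have hRΦ : R = fun b' => eval b' (C (a₀ ^ (n - k)) * (Q ^ s * Hp)) := by
    funext b'
    rw [hR]
    simp only [eval_mul, eval_C, eval_pow, hQev, hHev]
    congr 1
    rw [← Finset.prod_filter_mul_prod_filter_not Finset.univ (fun i : Fin n => (i : ℕ) < s),
      hfilter]
    congr 1
    rw [Finset.prod_congr rfl (fun i hi => ?_), Finset.prod_const, hcard]
    rw [hw i (Finset.mem_filter.mp hi).2]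
  have hQd : ∀ j, pderiv j Q = C (c j) := by
    intro j
    rw [hQdef]
    rw [map_sum]
    rw [Finset.sum_eq_single j]
    · simp [pderiv_mul, pderiv_X_self, hc]
    · intro i _ hij
      simp [pderiv_mul, pderiv_X_of_ne hij]
    · simp
  -- eval b Q = 0
  have hQ0 : eval b Q = 0 := by
    set p : Polynomial ℂ :=
      Polynomial.C a₀ * ∏ i : Fin n, (Polynomial.X - Polynomial.C (z i)) with hpdef
    have hf : (fun t => a₀ * ∏ i, (t - z i)) = fun t => Polynomial.eval t p := by
      funext t
      rw [hpdef]
      rw [Polynomial.eval_mul, Polynomial.eval_C, Polynomial.eval_prod]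
      simp
    have hdvd : (Polynomial.X - Polynomial.C w) ^ s ∣ p := by
      rw [hpdef,
        ← Finset.prod_filter_mul_prod_filter_not Finset.univ (fun i : Fin n => (i : ℕ) < s)]
      have : (∏ i ∈ Finset.univ.filter (fun i : Fin n => (i : ℕ) < s),
          (Polynomial.X - Polynomial.C (z i))) = (Polynomial.X - Polynomial.C w) ^ s := by
        rw [Finset.prod_congr rfl (fun i hi => ?_), Finset.prod_const, hcard]
        rw [hw i (Finset.mem_filter.mp hi).2]
      rw [this]
      exact ⟨Polynomial.C a₀ * ∏ i ∈ Finset.univ.filter (fun i : Fin n => ¬ (i : ℕ) < s),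
        (Polynomial.X - Polynomial.C (z i)), by ring⟩
    have hiter := aux_dvd_iter w p s hdvd k
    have h1 : (Polynomial.X - Polynomial.C w) ∣ Polynomial.derivative^[k] p := by
      refine dvd_trans ?_ hiter
      have hk' : 1 ≤ s - k := by omega
      calc Polynomial.X - Polynomial.C w
          = (Polynomial.X - Polynomial.C w) ^ 1 := (pow_one _).symm
        _ ∣ (Polynomial.X - Polynomial.C w) ^ (s - k) := pow_dvd_pow _ hk'
    obtain ⟨u, hu⟩ := h1
    have hzero : iteratedDeriv k (fun t => a₀ * ∏ i, (t - z i)) w = 0 := by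
      rw [hf, aux_iterated, hu]
      simp
    rw [hQev]
    rw [← hb w, hzero]
  rw [hRΦ]
  constructor
  · intro l h1 hlen
    obtain ⟨G, hG⟩ := aux_key c Q Hp hQd s l (s - l.length) (by omega)
    rw [aux_foldr, aux_foldr_C_mul, hG]
    simp [hQ0, zero_pow (show s - l.length ≠ 0 by omega)]
  · intro l hlen
    obtain ⟨G, hG⟩ := aux_key c Q Hp hQd s l 0 (by omega)
    rw [aux_foldr, aux_foldr_C_mul, hG, aux_norm]
    have hprod : (l.map c).prod = w ^ (s * (n - k) - (l.map Fin.val).sum) := by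
      have hle : ∀ x ∈ l.map Fin.val, x ≤ n - k := by
        intro x hx
        obtain ⟨j, _, rfl⟩ := List.mem_map.mp hx
        have := j.isLt
        omega
      obtain ⟨hsum, hp⟩ := aux_list_pow w (n - k) (l.map Fin.val) hle
      rw [List.map_map] at hp
      have h1 : (l.map Fin.val).length = s := by rw [List.length_map, hlen]
      rw [h1] at hp
      have h2 : ((fun x => w ^ (n - k - x)) ∘ Fin.val) = c := by funext j; rfl
      rw [h2] at hp
      exact hp
    simp only [eval_add, eval_mul, eval_pow, eval_C, hQ0, pow_one, zero_mul, add_zero,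
      pow_zero, one_mul, hlen, Nat.descFactorial_self, hprod, hHev]
    ring
end

section
/- Let f(z) = ∑ᵢ₌₀ⁿ aᵢ z^{n-i} with a₀, aₙ ≠ 0. Then f can be written as f(z) = a₀(z-w)²(z-z₃)⋯(z-zₙ) with w, z₃,…,zₙ pairwise distinct, if and only if R(f, f') = 0 and ∂²R(f,f')/∂b_{n-1}² ≠ 0, where bⱼ (j = 0,…,n-1) are the coefficients of f'. -/
open Polynomial

/-- The resultant of `f` and `g` over `ℂ`, via the product formula. -/
noncomputable def res (f g : Polynomial ℂ) : ℂ :=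
  f.leadingCoeff ^ g.natDegree * (f.roots.map (fun z => g.eval z)).prod

lemma eval_deriv_as_sum (f : Polynomial ℂ) (n : ℕ) (hn : 2 ≤ n) (hdeg : f.natDegree = n) (z : ℂ) :
    ∑ j : Fin n, (derivative f).coeff ((n-1) - (j:ℕ)) * z ^ ((n-1) - (j:ℕ))
      = (derivative f).eval z := by
  have hlt : (derivative f).natDegree < n :=
    lt_of_le_of_lt (natDegree_derivative_le f) (by omega)
  rw [eval_eq_sum_range' hlt,
    Fin.sum_univ_eq_sum_range (fun j => (derivative f).coeff ((n-1) - j) * z ^ ((n-1) - j))]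
  exact Finset.sum_range_reflect (fun k => (derivative f).coeff k * z ^ k) n

lemma pd_two (n : ℕ) (hn : 2 ≤ n) (f : Polynomial ℂ) (a₀ : ℂ) (hdeg : f.natDegree = n)
    (Rb : (Fin n → ℂ) → ℂ)
    (hRb : Rb = fun b' => a₀ ^ (n - 1) *
        (f.roots.map (fun zz => ∑ j : Fin n, b' j * zz ^ ((n - 1) - (j : ℕ)))).prod)
    (b : Fin n → ℂ)
    (hbdef : ∀ j : Fin n, b j = (derivative f).coeff ((n - 1) - (j : ℕ)))
    (j₀ : Fin n) (hj₀ : (j₀ : ℕ) = n - 1) :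
    ((pd j₀)^[2] Rb) b =
      2 * a₀ ^ (n-1) *
        ((f.roots.map fun z => (derivative f).eval z).map fun c => X + C c).prod.coeff 2 := by
  set β := b j₀ with hβ
  set M := f.roots.map fun z => (derivative f).eval z with hM
  set P : Polynomial ℂ := C (a₀^(n-1)) * (M.map fun c => X + C c).prod with hP
  set Q : Polynomial ℂ := P.comp (X - C β) with hQdef
  have key : ∀ t z, (∑ j : Fin n, Function.update b j₀ t j * z ^ ((n-1) - (j:ℕ)))
      = (derivative f).eval z + (t - β) := by
    intro t z
    have h1 : ∀ j : Fin n, Function.update b j₀ t j * z ^ ((n-1) - (j:ℕ))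
        = b j * z ^ ((n-1)-(j:ℕ)) + (if j = j₀ then t - β else 0) := by
      intro j; by_cases h : j = j₀
      · subst h; simp only [Function.update_self, hj₀, Nat.sub_self, pow_zero, if_pos rfl]
        rw [if_pos trivial]; ring
      · simp [Function.update_of_ne h, h]
    rw [Finset.sum_congr rfl (fun j _ => h1 j), Finset.sum_add_distrib,
      Finset.sum_ite_eq' Finset.univ j₀ (fun _ => t - β)]
    simp only [Finset.mem_univ, if_pos]
    congr 1
    simp only [hbdef]
    exact eval_deriv_as_sum f n hn hdeg z
  have hQ : ∀ t, Rb (Function.update b j₀ t) = Q.eval t := by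
    intro t
    rw [hRb]
    simp only [hQdef, eval_comp, eval_sub, eval_X, eval_C, hP, eval_mul, eval_multiset_prod,
      Multiset.map_map, Function.comp]
    simp only [eval_add, eval_X, eval_C, hM, Multiset.map_map, Function.comp]
    congr 1
    refine congrArg (Multiset.prod (M := ℂ)) (Multiset.map_congr rfl fun z _ => ?_)
    rw [key t z]; ring
  have hiter : ((pd j₀)^[2] Rb) b = (derivative (derivative Q)).eval β := by
    have h2 : ((pd j₀)^[2] Rb) b = pd j₀ (pd j₀ Rb) b := by
      rw [Function.iterate_succ, Function.iterate_one]; rfl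
    have hinner : ∀ t, (pd j₀ Rb) (Function.update b j₀ t) = (derivative Q).eval t := by
      intro t
      show deriv (fun s => Rb (Function.update (Function.update b j₀ t) j₀ s))
          (Function.update b j₀ t j₀) = _
      rw [Function.update_self]
      have hfe : (fun s => Rb (Function.update (Function.update b j₀ t) j₀ s))
          = fun s => Q.eval s := funext fun s => by rw [Function.update_idem, hQ]
      rw [hfe, Polynomial.deriv]
    have houter : pd j₀ (pd j₀ Rb) b
        = deriv (fun t => (pd j₀ Rb) (Function.update b j₀ t)) (b j₀) := rfl
    rw [h2, houter, funext hinner, Polynomial.deriv]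
  rw [hiter]
  have hdQ : derivative Q = (derivative P).comp (X - C β) := by
    rw [hQdef, derivative_comp]; simp
  have hddQ : derivative (derivative Q) = (derivative (derivative P)).comp (X - C β) := by
    rw [hdQ, derivative_comp]; simp
  rw [hddQ, eval_comp]
  simp only [eval_sub, eval_X, eval_C, sub_self]
  rw [← coeff_zero_eq_eval_zero, coeff_derivative, coeff_derivative]
  rw [hP, coeff_C_mul]
  push_cast
  ring

lemma struct (n : ℕ) (hn : 2 ≤ n) (f : Polynomial ℂ) (a₀ : ℂ)
    (hdeg : f.natDegree = n) (hlc : f.leadingCoeff = a₀) (ha₀ : a₀ ≠ 0) :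
    (∃ (w : ℂ) (r : Fin (n - 2) → ℂ),
        f = C a₀ * (X - C w) ^ 2 * ∏ i, (X - C (r i)) ∧
        Function.Injective r ∧ ∀ i, r i ≠ w)
      ↔ ((0 : ℂ) ∈ f.roots.map (fun z => (derivative f).eval z) ∧
        ((f.roots.map fun z => (derivative f).eval z).map fun c => X + C c).prod.coeff 2 ≠ 0) := by
  classical
  have hf0 : f ≠ 0 := leadingCoeff_ne_zero.mp (hlc ▸ ha₀)
  constructor
  · rintro ⟨w, r, hf, hinj, hne⟩
    set S : Multiset ℂ := Multiset.replicate 2 w + Finset.univ.val.map r with hS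
    have hf' : f = C a₀ * (S.map fun a => X - C a).prod := by
      rw [hf, hS, Multiset.map_add, Multiset.prod_add, Multiset.map_replicate,
        Multiset.prod_replicate, Finset.prod_eq_multiset_prod, Multiset.map_map, mul_assoc]
      rfl
    have hroots : f.roots = S := by
      rw [hf', roots_C_mul _ ha₀, roots_multiset_prod_X_sub_C]
    have hwS : w ∉ Finset.univ.val.map r := by
      intro hw
      obtain ⟨i, _, hi⟩ := Multiset.mem_map.mp hw
      exact hne i hi
    have hdw : (derivative f).eval w = 0 := by
      have hmult : 1 < f.rootMultiplicity w := by
        rw [← count_roots, hroots, hS, Multiset.count_add, Multiset.count_replicate_self,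
          Multiset.count_eq_zero_of_notMem hwS]
        norm_num
      exact ((one_lt_rootMultiplicity_iff_isRoot hf0).mp hmult).2
    have hdr : ∀ i, (derivative f).eval (r i) ≠ 0 := by
      intro i hcon
      have hri : (r i) ∈ f.roots := by
        rw [hroots, hS]
        exact Multiset.mem_add.mpr (Or.inr (Multiset.mem_map_of_mem r (Finset.mem_univ i)))
      have hmult : 1 < f.rootMultiplicity (r i) :=
        (one_lt_rootMultiplicity_iff_isRoot hf0).mpr ⟨((mem_roots hf0).mp hri), hcon⟩
      rw [← count_roots, hroots, hS, Multiset.count_add,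
        Multiset.count_eq_zero_of_notMem (s := Multiset.replicate 2 w) (a := r i)
          (by simp [Multiset.mem_replicate, hne i]),
        Multiset.count_map_eq_count' r _ hinj,
        Multiset.count_eq_one_of_mem Finset.univ.nodup (Finset.mem_univ i)] at hmult
      omega
    constructor
    · rw [hroots, hS]
      exact Multiset.mem_map.mpr ⟨w,
        Multiset.mem_add.mpr (Or.inl (Multiset.mem_replicate.mpr ⟨two_ne_zero, rfl⟩)), hdw⟩
    · have hM : f.roots.map (fun z => (derivative f).eval z)
          = Multiset.replicate 2 (0:ℂ)
            + (Finset.univ.val.map r).map (fun z => (derivative f).eval z) := by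
        rw [hroots, hS, Multiset.map_add, Multiset.map_replicate, hdw]
      rw [hM, Multiset.map_add, Multiset.prod_add, Multiset.map_replicate,
        Multiset.prod_replicate]
      rw [show ((X:ℂ[X]) + C 0) = X by simp]
      rw [mul_comm, coeff_mul_X_pow', if_pos (le_refl 2), Nat.sub_self]
      rw [coeff_zero_eq_eval_zero, eval_multiset_prod, Multiset.map_map]
      simp only [Function.comp, eval_add, eval_X, eval_C, zero_add]
      refine Multiset.prod_ne_zero ?_
      intro h0
      rw [Multiset.map_id', Multiset.map_map] at h0
      obtain ⟨i, _, hi⟩ := Multiset.mem_map.mp h0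
      exact hdr i hi
  · rintro ⟨hmem, hcoeff⟩
    set Z := f.roots.filter (fun z => (derivative f).eval z = 0) with hZ
    set Y := f.roots.filter (fun z => ¬ (derivative f).eval z = 0) with hYdef
    have hsplitR : Z + Y = f.roots := Multiset.filter_add_not _ _
    have hcard : Multiset.card f.roots = n := by
      have := (IsAlgClosed.splits f).natDegree_eq_card_roots
      rw [hdeg] at this
      omega
    have hYne : ∀ y ∈ Y, (derivative f).eval y ≠ 0 := fun y hy =>
      (Multiset.mem_filter.mp hy).2
    have hZmap : Z.map (fun z => (derivative f).eval z)
        = Multiset.replicate (Multiset.card Z) (0:ℂ) := by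
      refine Multiset.eq_replicate.mpr ⟨by rw [Multiset.card_map], ?_⟩
      intro c hc
      obtain ⟨z, hz, rfl⟩ := Multiset.mem_map.mp hc
      exact (Multiset.mem_filter.mp hz).2
    have hMsplit : f.roots.map (fun z => (derivative f).eval z)
        = Multiset.replicate (Multiset.card Z) (0:ℂ)
          + Y.map (fun z => (derivative f).eval z) := by
      conv_lhs => rw [← hsplitR]
      rw [Multiset.map_add, hZmap]
    set q : Polynomial ℂ := ((Y.map (fun z => (derivative f).eval z)).map fun c => X + C c).prod
      with hq
    have hT : ((f.roots.map fun z => (derivative f).eval z).map fun c => X + C c).prod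
        = q * X ^ (Multiset.card Z) := by
      rw [hMsplit, Multiset.map_add, Multiset.prod_add, Multiset.map_replicate,
        Multiset.prod_replicate, show ((X:ℂ[X]) + C 0) = X by simp, mul_comm]
    -- coeff 2 of T
    rw [hT, coeff_mul_X_pow'] at hcoeff
    have hkle : Multiset.card Z ≤ 2 := by
      by_contra h
      rw [if_neg (by omega)] at hcoeff
      exact hcoeff rfl
    rw [if_pos hkle] at hcoeff
    -- there is a multiple root
    obtain ⟨w, hwmem, hw0⟩ := Multiset.mem_map.mp hmem
    have hwmult : 1 < f.rootMultiplicity w :=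
      (one_lt_rootMultiplicity_iff_isRoot hf0).mpr ⟨(mem_roots hf0).mp hwmem, hw0⟩
    have hcountw : 2 ≤ Multiset.count w f.roots := by
      rw [count_roots]; omega
    have hcountwZ : Multiset.count w Z = Multiset.count w f.roots := by
      rw [hZ, Multiset.count_filter, if_pos hw0]
    have hkge : 2 ≤ Multiset.card Z := le_trans (by omega) (Multiset.count_le_card w Z)
    have hk2 : Multiset.card Z = 2 := le_antisymm hkle hkge
    have hcw2 : Multiset.count w f.roots = 2 := by
      have := Multiset.count_le_card w Z
      omega
    have hZrep : Z = Multiset.replicate 2 w := by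
      refine (Multiset.eq_of_le_of_card_le
        (Multiset.le_count_iff_replicate_le.mp (by omega)) ?_).symm
      rw [hk2, Multiset.card_replicate]
    -- Y is nodup
    have hsimple : ∀ y ∈ Y, Multiset.count y f.roots = 1 := by
      intro y hy
      have h1 : 1 ≤ Multiset.count y f.roots :=
        Multiset.one_le_count_iff_mem.mpr (Multiset.mem_filter.mp hy).1
      have h2 : Multiset.count y f.roots ≤ 1 := by
        by_contra h
        have : 1 < f.rootMultiplicity y := by rw [← count_roots]; omega
        exact hYne y hy ((one_lt_rootMultiplicity_iff_isRoot hf0).mp this).2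
      omega
    have hYnodup : Y.Nodup := by
      rw [Multiset.nodup_iff_count_le_one]
      intro a
      by_cases ha : a ∈ Y
      · have h1 := hsimple a ha
        have h2 : Multiset.count a Y ≤ Multiset.count a f.roots :=
          Multiset.count_le_of_le a (Multiset.filter_le _ _)
        omega
      · rw [Multiset.count_eq_zero_of_notMem ha]; omega
    have hYw : ∀ y ∈ Y, y ≠ w := by
      intro y hy h; exact hYne y hy (h ▸ hw0)
    have hcardY : Multiset.card Y = n - 2 := by
      have := congrArg Multiset.card hsplitR
      rw [Multiset.card_add, hcard, hk2] at this
      omega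
    have hfact : f = C a₀ * (f.roots.map fun a => X - C a).prod := by
      have h := (IsAlgClosed.splits f).eq_prod_roots
      rwa [hlc] at h
    have hroots2 : f.roots = Multiset.replicate 2 w + Y := by
      rw [← hsplitR, hZrep]
    set L := Y.toList with hL
    have hYL : (L : Multiset ℂ) = Y := Multiset.coe_toList Y
    have hlen : L.length = n - 2 := by rw [Multiset.length_toList, hcardY]
    have hLnodup : L.Nodup := by
      rw [← Multiset.coe_nodup, hYL]; exact hYnodup
    have hmemY : ∀ i : Fin (n - 2), L.get (Fin.cast hlen.symm i) ∈ Y := by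
      intro i
      rw [← hYL]
      exact List.get_mem L _
    refine ⟨w, fun i => L.get (Fin.cast hlen.symm i), ?_, ?_, fun i => hYw _ (hmemY i)⟩
    · rw [hfact, hroots2, Multiset.map_add, Multiset.prod_add, Multiset.map_replicate,
        Multiset.prod_replicate, ← mul_assoc]
      congr 1
      rw [← hYL, Multiset.map_coe, Multiset.prod_coe,
        ← Fin.prod_univ_fun_getElem L (fun a => X - C a)]
      exact (Fintype.prod_equiv (finCongr hlen.symm)
        (fun i => X - C (L.get (Fin.cast hlen.symm i))) _ (fun i => rfl)).symm
    · intro i j h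
      exact (Fin.cast_injective _).eq_iff.mp
        ((List.nodup_iff_injective_get.mp hLnodup) h) |>.symm ▸ rfl

/-- Theorem 7: `f` has exactly one multiple root, of multiplicity exactly 2, iff
`R(f,f') = 0` and `∂²R(f,f')/∂b_{n-1}² ≠ 0`. -/
theorem stmt11 (n : ℕ) (hn : 2 ≤ n) (f : Polynomial ℂ) (a₀ : ℂ)
    (hdeg : f.natDegree = n) (hlc : f.leadingCoeff = a₀) (ha₀ : a₀ ≠ 0)
    (hc : f.coeff 0 ≠ 0)
    (Rb : (Fin n → ℂ) → ℂ)
    (hRb : Rb = fun b' => a₀ ^ (n - 1) *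
        (f.roots.map (fun zz => ∑ j : Fin n, b' j * zz ^ ((n - 1) - (j : ℕ)))).prod)
    (b : Fin n → ℂ)
    (hbdef : ∀ j : Fin n, b j = (derivative f).coeff ((n - 1) - (j : ℕ))) :
    (∃ (w : ℂ) (r : Fin (n - 2) → ℂ),
        f = C a₀ * (X - C w) ^ 2 * ∏ i, (X - C (r i)) ∧
        Function.Injective r ∧ ∀ i, r i ≠ w)
      ↔ (res f (derivative f) = 0 ∧ ((pd (⟨n - 1, by omega⟩ : Fin n))^[2] Rb) b ≠ 0) := by
  have hj₀ : (((⟨n - 1, by omega⟩ : Fin n)) : ℕ) = n - 1 := rfl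
  have hpd := pd_two n hn f a₀ hdeg Rb hRb b hbdef _ hj₀
  rw [struct n hn f a₀ hdeg hlc ha₀]
  constructor
  · rintro ⟨hmem, hcoeff⟩
    constructor
    · simp only [res, hlc]
      rw [Multiset.prod_eq_zero hmem, mul_zero]
    · rw [hpd]
      intro h
      apply hcoeff
      rcases mul_eq_zero.mp h with h' | h'
      · rcases mul_eq_zero.mp h' with h'' | h''
        · norm_num at h''
        · exact absurd h'' (pow_ne_zero _ ha₀)
      · exact h'
  · rintro ⟨hres, hpd2⟩
    constructor
    · simp only [res, hlc] at hres
      rcases mul_eq_zero.mp hres with h | h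
      · exact absurd h (pow_ne_zero _ ha₀)
      · exact Multiset.prod_eq_zero_iff.mp h
    · intro h
      apply hpd2
      rw [hpd, h, mul_zero]
end

section
/- Let f(z) = ∑ᵢ₌₀ⁿ aᵢ z^{n-i} (a₀ ≠ 0) have the form f(z) = a₀(z-w)ˢ(z-z_{s+1})⋯(z-zₙ) with 2 ≤ s < n and w ≠ zᵢ for all i. Then for R = R(f, f^{(s-1)}) viewed as a function of the coefficients a₀,…,aₙ (with the roots of f^{(s-1)} fixed), the vector (∂R/∂a₀, ∂R/∂a₁, …, ∂R/∂aₙ) equals γ·∏ᵢ₌₂^{n-s+1} f(yᵢ) · (wⁿ, w^{n-1}, …, w, 1), where γ = (-1)^{(n-s+1)n}(n(n-1)⋯(n-s+2)·a₀)ⁿ and y₂,…,y_{n-s+1} are the roots of f^{(s-1)} other than y₁ = w. -/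
/-- Theorem 8, formula (63): if `f = a₀(z-w)ˢ(z-z_{s+1})⋯(z-zₙ)` with `w ≠ zᵢ`, then for
`R = R(f, f^{(s-1)})` as a function of the coefficients `a` of `f`,
`∂R/∂aⱼ = γ(s,n) ∏_{i≥2} f(yᵢ) · w^{n-j}`, where
`γ(s,n) = (-1)^{(n-s+1)n} (n(n-1)⋯(n-s+2) a₀)ⁿ` and the `yᵢ` are the roots of
`f^{(s-1)}` with `y₁ = w`. -/
theorem stmt14 (n s : ℕ) (hs2 : 2 ≤ s) (hsn : s < n)
    (a₀ w b₀ : ℂ) (ha₀ : a₀ ≠ 0)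
    (z : Fin (n - s) → ℂ) (hzw : ∀ i, z i ≠ w)
    (f : ℂ → ℂ) (hf : ∀ u, f u = a₀ * (u - w) ^ s * ∏ i, (u - z i))
    (a : Fin (n+1) → ℂ)
    (hfa : ∀ u, f u = ∑ i : Fin (n+1), a i * u ^ (n - (i : ℕ)))
    (hb₀ : b₀ = (n.descFactorial (s - 1) : ℂ) * a₀)
    (y : Fin (n - s + 1) → ℂ)
    (hy : ∀ u, iteratedDeriv (s - 1) f u = b₀ * ∏ j, (u - y j))
    (hy0 : y ⟨0, by omega⟩ = w)
    (Ra : (Fin (n+1) → ℂ) → ℂ)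
    (hRa : Ra = fun a' => (-1 : ℂ) ^ ((n - s + 1) * n) * b₀ ^ n *
        ∏ j : Fin (n - s + 1), ∑ i : Fin (n+1), a' i * (y j) ^ (n - (i : ℕ))) :
    ∀ j : Fin (n+1), pd j Ra a =
      (-1 : ℂ) ^ ((n - s + 1) * n) * ((n.descFactorial (s - 1) : ℂ) * a₀) ^ n *
        (∏ i ∈ Finset.univ.filter (fun i : Fin (n - s + 1) => (i : ℕ) ≠ 0), f (y i)) *
        w ^ (n - (j : ℕ)) := by
  intro J
  set i0 : Fin (n - s + 1) := ⟨0, by omega⟩ with hi0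
  set C : ℂ := (-1 : ℂ) ^ ((n - s + 1) * n) * b₀ ^ n with hC
  -- rewrite Ra(update a J t) as C * product of affine functions of t
  have key : ∀ t : ℂ, Ra (Function.update a J t) =
      C * ∏ j : Fin (n - s + 1), (f (y j) + (t - a J) * (y j) ^ (n - (J : ℕ))) := by
    intro t
    rw [hRa]
    refine congrArg (fun p => C * p) (Finset.prod_congr rfl fun j _ => ?_)
    rw [hfa]
    rw [← Finset.sum_erase_add _ _ (Finset.mem_univ J),
        ← Finset.sum_erase_add Finset.univ (fun i => a i * (y j) ^ (n - (i : ℕ)))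
          (Finset.mem_univ J)]
    have herase : ∀ i ∈ Finset.univ.erase J,
        Function.update a J t i * (y j) ^ (n - (i : ℕ)) = a i * (y j) ^ (n - (i : ℕ)) := by
      intro i hi
      rw [Function.update_of_ne (Finset.ne_of_mem_erase hi)]
    rw [Finset.sum_congr rfl herase, Function.update_self]
    ring
  -- each factor has derivative (y j)^(n-J)
  have hdj : ∀ j : Fin (n - s + 1),
      HasDerivAt (fun t : ℂ => f (y j) + (t - a J) * (y j) ^ (n - (J : ℕ)))
        ((y j) ^ (n - (J : ℕ))) (a J) := by
    intro j
    have h1 : HasDerivAt (fun t : ℂ => (t - a J) * (y j) ^ (n - (J : ℕ)))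
        (1 * (y j) ^ (n - (J : ℕ))) (a J) :=
      ((hasDerivAt_id (a J)).sub_const (a J)).mul_const _
    simpa using h1.const_add (f (y j))
  have hprod : HasDerivAt (fun t : ℂ => ∏ j : Fin (n - s + 1),
        (f (y j) + (t - a J) * (y j) ^ (n - (J : ℕ))))
      (∑ j : Fin (n - s + 1),
        (∏ k ∈ Finset.univ.erase j, (f (y k) + (a J - a J) * (y k) ^ (n - (J : ℕ)))) •
          ((y j) ^ (n - (J : ℕ)))) (a J) :=
    HasDerivAt.fun_finsetProd (fun j _ => hdj j)
  have hfw : f w = 0 := by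
    rw [hf]
    have : (w - w) ^ s = 0 := by
      rw [sub_self]
      exact zero_pow (by omega)
    rw [this]; ring
  -- simplify the sum: only j = i0 survives
  have hsum : (∑ j : Fin (n - s + 1),
      (∏ k ∈ Finset.univ.erase j, (f (y k) + (a J - a J) * (y k) ^ (n - (J : ℕ)))) •
        ((y j) ^ (n - (J : ℕ))))
      = (∏ k ∈ Finset.univ.erase i0, f (y k)) * w ^ (n - (J : ℕ)) := by
    rw [Finset.sum_eq_single i0]
    · simp only [sub_self, zero_mul, add_zero, smul_eq_mul, hy0]
    · intro j _ hj
      have h0 : (∏ k ∈ Finset.univ.erase j,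
          (f (y k) + (a J - a J) * (y k) ^ (n - (J : ℕ)))) = 0 := by
        apply Finset.prod_eq_zero (Finset.mem_erase.2 ⟨Ne.symm hj, Finset.mem_univ i0⟩)
        · simp [hy0, hfw]
      rw [h0, zero_smul]
    · intro h; exact absurd (Finset.mem_univ i0) h
  have hderiv : pd J Ra a = C * ((∏ k ∈ Finset.univ.erase i0, f (y k)) * w ^ (n - (J : ℕ))) := by
    unfold pd
    have : (fun t => Ra (Function.update a J t)) =
        fun t => C * ∏ j : Fin (n - s + 1), (f (y j) + (t - a J) * (y j) ^ (n - (J : ℕ))) :=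
      funext key
    rw [this]
    rw [deriv_const_mul _ hprod.differentiableAt, hprod.deriv, hsum]
  rw [hderiv, hC, hb₀]
  have hfilter : Finset.univ.filter (fun i : Fin (n - s + 1) => (i : ℕ) ≠ 0)
      = Finset.univ.erase i0 := by
    ext k
    simp only [Finset.mem_filter, Finset.mem_erase, Finset.mem_univ, true_and, and_true]
    constructor
    · intro h hk; exact h (by rw [hk])
    · intro h hk; exact h (Fin.ext hk)
  rw [hfilter]
  ring
end

section
/- Let f be a complex polynomial of degree n ≥ 2 with leading coefficient a₀ ≠ 0 and nonzero constant term, and suppose all first-order partial derivatives ∂R/∂aⱼ (j = 0,…,n) of R = R(f, f') are nonzero when R(f,f') = 0. Then f has exactly one multiple root, it has multiplicity exactly 2, and this root w satisfies w = (∂R/∂aⱼ)/(∂R/∂a_{j+1}) for each j = 0,…,n-1. -/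
/-- Gelfand–Kapranov–Zelevinsky criterion (Proposition 5): if `R(f,f') = 0` and all the
partial derivatives `∂R/∂aⱼ` of `R = R(f,f')` are nonzero, then `f` has exactly one
multiple root, of multiplicity exactly 2, and it equals `(∂R/∂aⱼ)/(∂R/∂a_{j+1})`. -/
theorem stmt19 (n : ℕ) (hn : 2 ≤ n)
    (a : Fin (n+1) → ℂ) (ha0 : a 0 ≠ 0) (han : a (Fin.last n) ≠ 0)
    (f : ℂ → ℂ) (hf : ∀ u, f u = ∑ i : Fin (n+1), a i * u ^ (n - (i : ℕ)))
    (y : Fin (n - 1) → ℂ)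
    (hy : ∀ u, deriv f u = (n : ℂ) * a 0 * ∏ j, (u - y j))
    (Ra : (Fin (n+1) → ℂ) → ℂ)
    (hRa : Ra = fun a' => (-1 : ℂ) ^ ((n - 1) * n) * ((n : ℂ) * a 0) ^ n *
        ∏ j : Fin (n - 1), ∑ i : Fin (n+1), a' i * (y j) ^ (n - (i : ℕ)))
    (hR0 : Ra a = 0)
    (hRj : ∀ j : Fin (n+1), pd j Ra a ≠ 0) :
    ∃ w : ℂ,
      (f w = 0 ∧ deriv f w = 0 ∧ iteratedDeriv 2 f w ≠ 0) ∧
      (∀ v : ℂ, f v = 0 → deriv f v = 0 → v = w) ∧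
      ∀ j : Fin n, w = pd j.castSucc Ra a / pd j.succ Ra a := by
  classical
  have hn0 : (n : ℂ) ≠ 0 := Nat.cast_ne_zero.mpr (by omega)
  set C : ℂ := (-1 : ℂ) ^ ((n - 1) * n) * ((n : ℂ) * a 0) ^ n with hCdef
  have hC : C ≠ 0 :=
    mul_ne_zero (pow_ne_zero _ (by norm_num)) (pow_ne_zero _ (mul_ne_zero hn0 ha0))
  have hfy : ∀ k : Fin (n - 1),
      (∑ i : Fin (n+1), a i * (y k) ^ (n - (i : ℕ))) = f (y k) := fun k => (hf (y k)).symm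
  -- a root of f among the y's
  have hprod : ∏ k : Fin (n - 1), f (y k) = 0 := by
    have h := hR0
    rw [hRa] at h
    simp only at h
    rw [Finset.prod_congr rfl fun k _ => hfy k] at h
    exact (mul_eq_zero.mp h).resolve_left hC
  obtain ⟨k₀, -, hk₀⟩ := Finset.prod_eq_zero_iff.mp hprod
  -- the formula for the partial derivatives
  have hpd : ∀ j : Fin (n+1), pd j Ra a =
      C * ((∏ l ∈ Finset.univ.erase k₀, f (y l)) * y k₀ ^ (n - (j : ℕ))) := by
    intro j
    have key : ∀ t : ℂ, Ra (Function.update a j t) =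
        C * ∏ k : Fin (n - 1), (f (y k) + (t - a j) * y k ^ (n - (j : ℕ))) := by
      intro t
      rw [hRa]
      simp only
      congr 1
      refine Finset.prod_congr rfl fun k _ => ?_
      calc (∑ i : Fin (n+1), Function.update a j t i * y k ^ (n - (i : ℕ)))
          = ∑ i : Fin (n+1), (a i * y k ^ (n - (i : ℕ)) +
              if i = j then (t - a j) * y k ^ (n - (j : ℕ)) else 0) := by
            refine Finset.sum_congr rfl fun i _ => ?_
            rcases eq_or_ne i j with rfl | h
            · rw [Function.update_self, if_pos rfl]
              ring
            · simp [Function.update_of_ne h, h]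
        _ = f (y k) + (t - a j) * y k ^ (n - (j : ℕ)) := by
            rw [Finset.sum_add_distrib, Finset.sum_ite_eq' Finset.univ j]
            simp [hfy k]
    have h1 : ∀ k ∈ (Finset.univ : Finset (Fin (n - 1))),
        HasDerivAt (fun t : ℂ => f (y k) + (t - a j) * y k ^ (n - (j : ℕ)))
          (y k ^ (n - (j : ℕ))) (a j) := by
      intro k _
      simpa using
        ((((hasDerivAt_id (a j)).sub_const (a j)).mul_const (y k ^ (n - (j : ℕ)))).const_add
          (f (y k)))
    have h2 := (HasDerivAt.fun_finsetProd h1).const_mul C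
    have hsum : (∑ k : Fin (n - 1),
        (∏ l ∈ Finset.univ.erase k, (f (y l) + (a j - a j) * y l ^ (n - (j : ℕ)))) •
          y k ^ (n - (j : ℕ))) =
        (∏ l ∈ Finset.univ.erase k₀, f (y l)) * y k₀ ^ (n - (j : ℕ)) := by
      simp only [sub_self, zero_mul, add_zero, smul_eq_mul]
      refine Finset.sum_eq_single k₀ (fun k _ hk => ?_) (by simp)
      rw [Finset.prod_eq_zero (Finset.mem_erase.mpr ⟨(Ne.symm hk), Finset.mem_univ k₀⟩) hk₀,
        zero_mul]
    rw [hsum] at h2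
    have heq : (fun t => Ra (Function.update a j t)) =
        fun t => C * ∏ k : Fin (n - 1), (f (y k) + (t - a j) * y k ^ (n - (j : ℕ))) :=
      funext key
    show deriv (fun t => Ra (Function.update a j t)) (a j) = _
    rw [heq]
    exact h2.deriv
  -- consequences of nonvanishing of the partials
  have hQ : (∏ l ∈ Finset.univ.erase k₀, f (y l)) ≠ 0 := by
    have h := hRj (Fin.last n)
    rw [hpd (Fin.last n)] at h
    exact (mul_ne_zero_iff.mp (mul_ne_zero_iff.mp h).2).1
  have hne : ∀ l : Fin (n - 1), l ≠ k₀ → f (y l) ≠ 0 := fun l hl =>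
    Finset.prod_ne_zero_iff.mp hQ l (Finset.mem_erase.mpr ⟨hl, Finset.mem_univ l⟩)
  have hyne : ∀ l : Fin (n - 1), l ≠ k₀ → y k₀ - y l ≠ 0 := by
    intro l hl h
    exact hne l hl (by rw [← sub_eq_zero.mp h]; exact hk₀)
  refine ⟨y k₀, ⟨hk₀, ?_, ?_⟩, ?_, ?_⟩
  · rw [hy]
    exact mul_eq_zero_of_right _ (Finset.prod_eq_zero (Finset.mem_univ k₀) (sub_self _))
  · -- second derivative nonzero
    have hdf : deriv f = fun u => (n : ℂ) * a 0 * ∏ j, (u - y j) := funext hy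
    have h2 : iteratedDeriv 2 f (y k₀) = deriv (deriv f) (y k₀) := by
      rw [show (2 : ℕ) = 1 + 1 from rfl, iteratedDeriv_succ, iteratedDeriv_one]
    rw [h2, hdf]
    have hder2 :
        HasDerivAt (fun u => (n : ℂ) * a 0 * ∏ j, (u - y j))
          ((n : ℂ) * a 0 * ∑ k : Fin (n - 1),
            (∏ l ∈ Finset.univ.erase k, (y k₀ - y l)) • (1 : ℂ)) (y k₀) :=
      (HasDerivAt.fun_finsetProd fun k _ => (hasDerivAt_id (y k₀)).sub_const (y k)).const_mul _
    rw [hder2.deriv]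
    have hsum2 : (∑ k : Fin (n - 1), (∏ l ∈ Finset.univ.erase k, (y k₀ - y l)) • (1 : ℂ)) =
        ∏ l ∈ Finset.univ.erase k₀, (y k₀ - y l) := by
      simp only [smul_eq_mul, mul_one]
      refine Finset.sum_eq_single k₀ (fun k _ hk => ?_) (by simp)
      exact Finset.prod_eq_zero (Finset.mem_erase.mpr ⟨Ne.symm hk, Finset.mem_univ k₀⟩)
        (sub_self _)
    rw [hsum2]
    exact mul_ne_zero (mul_ne_zero hn0 ha0)
      (Finset.prod_ne_zero_iff.mpr fun l hl => hyne l (Finset.mem_erase.mp hl).1)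
  · -- uniqueness
    intro v hv hv'
    rw [hy] at hv'
    rcases mul_eq_zero.mp hv' with h | h
    · exact absurd h (mul_ne_zero hn0 ha0)
    · obtain ⟨l, -, hl⟩ := Finset.prod_eq_zero_iff.mp h
      have hvl : v = y l := sub_eq_zero.mp hl
      rcases eq_or_ne l k₀ with rfl | hlk
      · exact hvl
      · exact absurd (hvl ▸ hv) (hne l hlk)
  · -- the ratio formula
    intro j
    have hm : n - ((j.castSucc : Fin (n+1)) : ℕ) = (n - ((j.succ : Fin (n+1)) : ℕ)) + 1 := by
      have hj := j.isLt
      simp only [Fin.coe_castSucc, Fin.val_succ]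
      omega
    rw [eq_div_iff (hRj j.succ), hpd j.castSucc, hpd j.succ, hm, pow_succ]
    ring
end
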